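/- The operators P_{−z/M} ∘ P_{−u} ∘ T_{M/u} ∘ P_{z/M} and (1/(1−z/u)) · P_{−u} ∘ T_{M/u} are equal; consequently, equating coefficients of z^k u^r on both sides gives P_{−z/M} D_r P_{z/M}|_{z^k} = D_{k+r} for all k ≥ 0. -/

import Mathlib

/-!
Common setup for "A proof of the Theta Operator Conjecture" (Romero).

* `K = ℚ(q,t)` is realized as the fraction field of `ℚ[q,t]`.
* `Λ`, the ring of symmetric functions with coefficients in `ℚ(q,t)`, is realized as the
  polynomial ring on the power sums `p 1, p 2, …` (a presentation valid in characteristic 0).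
* The plethystic exponential `E[X] = ∑ hₙ[X] = exp (∑ p_k/k)` is encoded through the
  Newton-type recursion `n·Gₙ = ∑_{k=1}^{n} c_k G_{n-k}` for the coefficients of
  `exp (∑_{k ≥ 1} c_k z^k / k)`.
* Formal series in an auxiliary variable `z` (resp. a Laurent variable) with coefficients
  in `Λ` are elements of `PowerSeries Λ` (resp. `LaurentSeries Λ`), and operator identities
  involving generating functions are stated coefficientwise / as series identities,
  pointwise on `F : Λ`.
* The modified Macdonald basis `H̃_μ` (indexed by `YoungDiagram`) is axiomatized in the
  structure `MacdonaldBasis` via the Garsia–Haiman triangularity/normalization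
  characterization; all Macdonald eigenoperators (`Δ_f`, `∇`, `Π`, `Θ_k`, `Δ_v`) are then
  defined diagonally from it.
-/

noncomputable section

namespace ThetaOperators

open scoped Classical

/-- The base field `ℚ(q,t)`. -/
abbrev K : Type := FractionRing (MvPolynomial (Fin 2) ℚ)

/-- The parameter `q`. -/
def q : K := algebraMap (MvPolynomial (Fin 2) ℚ) K (MvPolynomial.X 0)

/-- The parameter `t`. -/
def t : K := algebraMap (MvPolynomial (Fin 2) ℚ) K (MvPolynomial.X 1)

/-- `M = (1-q)(1-t)`. -/
def M : K := (1 - q) * (1 - t)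

/-- The ring of symmetric functions with coefficients in `ℚ(q,t)`, presented as the
polynomial ring on the power sums. -/
abbrev Λ : Type := MvPolynomial ℕ+ K

/-- The power sum symmetric function `p_k`. -/
def p (k : ℕ+) : Λ := MvPolynomial.X k

/-- `genF c n` is the coefficient of `z^n` in `exp (∑_{k ≥ 1} c_k z^k / k)`,
via the Newton-type recursion `n·Gₙ = ∑_{k=1}^{n} c_k G_{n-k}`. -/
def genF (c : ℕ+ → Λ) : ℕ → Λ
  | 0 => 1
  | n + 1 =>
      (((n : K) + 1)⁻¹) •
        ∑ k ∈ Finset.range (n + 1), c ⟨k + 1, Nat.succ_pos k⟩ * genF c (n - k)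
  termination_by n => n
  decreasing_by simp_wf <;> omega

/-- The complete homogeneous symmetric function `h_n`: coefficient of `z^n`
in `E[zX] = exp (∑ p_k z^k / k)`. -/
def h (n : ℕ) : Λ := genF p n

/-- The elementary symmetric function `e_n`: `E[-zX] = ∑ (-z)^n e_n`. -/
def e (n : ℕ) : Λ := (-1) ^ n * genF (fun k => -p k) n

/-- Scalar version of `genF`: coefficient of `z^n` in `exp (∑_{k≥1} c_k z^k / k)` over `K`. -/
def genK (c : ℕ+ → K) : ℕ → K
  | 0 => 1
  | n + 1 =>
      ((n : K) + 1)⁻¹ *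
        ∑ k ∈ Finset.range (n + 1), c ⟨k + 1, Nat.succ_pos k⟩ * genK c (n - k)
  termination_by n => n
  decreasing_by simp_wf <;> omega

/-- `Eser ζ n` is the coefficient of `z^n` in `E[zWX]`, where `W` is the alphabet with
power sums `p_k[W] = ζ k`.  E.g. `Eser (fun _ => -1) n = (-1)^n eₙ[X]`, so that
`∑ z^n · Eser (fun _ => -1) n = E[-zX]`. -/
def Eser (ζ : ℕ+ → K) (n : ℕ) : Λ := genF (fun k => MvPolynomial.C (ζ k) * p k) n

/-- `p_k[M] = (1-q^k)(1-t^k)`. -/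
def Mk (k : ℕ+) : K := (1 - q ^ (k : ℕ)) * (1 - t ^ (k : ℕ))

/-- `p_k[X/M]`-twist: `1/((1-q^k)(1-t^k))`.  Thus `Eser invM n = h_n[X/M]` and
`∑ z^n Eser invM n = E[zX/M]`; similarly `∑ z^n Eser (fun j => -invM j) n = E[-zX/M]`. -/
def invM (k : ℕ+) : K := (Mk k)⁻¹

/-- Plethystic translation `T_Y : F[X] ↦ F[X+Y]` by an alphabet `Y` with power sums
`p_k[Y] = a k ∈ K`. -/
def Ttr (a : ℕ+ → K) : Λ →ₐ[K] Λ :=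
  MvPolynomial.aeval fun k => p k + MvPolynomial.C (a k)

/-- `f ↦ f* = f[X/M]`. -/
def star : Λ →ₐ[K] Λ :=
  MvPolynomial.aeval fun k => MvPolynomial.C (invM k) * p k

/-- `F ↦ F[X + M/z]`, as a Laurent series in `z` with coefficients in `Λ`
(the translation `T_{M/z}`). -/
def TMz : Λ →ₐ[K] LaurentSeries Λ :=
  MvPolynomial.aeval fun k =>
    HahnSeries.C (p k) + Mk k • HahnSeries.single (-((k : ℕ) : ℤ)) (1 : Λ)

/-- `E[-zX]` as a Laurent series in `z`. -/
def EnegL : LaurentSeries Λ :=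
  HahnSeries.ofPowerSeries ℤ Λ (PowerSeries.mk (Eser fun _ => -1))

/-- The Garsia–Haiman–Tesler operator `D_k`:
`D_k F = (F[X + M/z] · E[-zX]) |_{z^k}`. -/
def D (k : ℤ) (F : Λ) : Λ := ((TMz F) * EnegL).coeff k

/-- `p_k[B_μ] = ∑_{(i,j) ∈ μ} q^{k i'} t^{k j'}` where the cell `c` of the Young diagram
has (0-based) column index `c.2` (the `q`-exponent) and row index `c.1` (the `t`-exponent). -/
def Bexp (μ : YoungDiagram) (k : ℕ+) : K :=
  ∑ c ∈ μ.cells, q ^ ((k : ℕ) * c.2) * t ^ ((k : ℕ) * c.1)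

/-- `n(μ) = ∑ᵢ (i-1) μᵢ`: the sum of the (0-based) row indices of the cells. -/
def nstat (μ : YoungDiagram) : ℕ := ∑ c ∈ μ.cells, c.1

/-- `n(μ') = ∑ᵢ (i-1) μᵢ'`: the sum of the (0-based) column indices of the cells. -/
def nstat' (μ : YoungDiagram) : ℕ := ∑ c ∈ μ.cells, c.2

/-- `h_n` for integer index (zero for negative `n`). -/
def hZ (n : ℤ) : Λ := if n < 0 then 0 else h n.toNat

/-- The Schur function, via the Jacobi–Trudi determinant. -/
def schur (μ : YoungDiagram) : Λ :=
  Matrix.det (Matrix.of fun i j : Fin (μ.colLen 0) =>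
    hZ ((μ.rowLen i : ℤ) + (j : ℤ) - (i : ℤ)))

/-- Dominance order: `lam ⊵ μ`. -/
def Dominates (lam μ : YoungDiagram) : Prop :=
  lam.card = μ.card ∧
    ∀ m : ℕ, ∑ i ∈ Finset.range m, μ.rowLen i ≤ ∑ i ∈ Finset.range m, lam.rowLen i

/-- The span of the Schur functions `s_lam` with `lam ⊵ μ`. -/
def domSpan (μ : YoungDiagram) : Submodule K Λ :=
  Submodule.span K {f | ∃ lam, Dominates lam μ ∧ f = schur lam}

/-- Plethystic twist `F[X] ↦ F[AX]` for an alphabet `A` with `p_k[A] = a k`. -/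
def twist (a : ℕ+ → K) : Λ →ₐ[K] Λ :=
  MvPolynomial.aeval fun k => MvPolynomial.C (a k) * p k

/-- Evaluation at the single-letter alphabet `X = 1` (i.e. `p_k ↦ 1`); for homogeneous `F`
of degree `n` this is the Hall scalar product `⟨F, s_(n)⟩`. -/
def ev1 : Λ →ₐ[K] K := MvPolynomial.aeval fun _ => 1

/-- The modified Macdonald basis `H̃_μ` of `Λ`, axiomatized by the Garsia–Haiman
characterization: `H̃_μ[X(q-1)] ∈ span{s_lam : lam ⊵ μ}`,
`H̃_μ[X(t-1)] ∈ span{s_lam : lam ⊵ μ'}`, and `⟨H̃_μ, s_(n)⟩ = 1`. -/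
structure MacdonaldBasis where
  H : Module.Basis YoungDiagram K Λ
  triangular_q : ∀ μ, twist (fun k => q ^ (k : ℕ) - 1) (H μ) ∈ domSpan μ
  triangular_t : ∀ μ, twist (fun k => t ^ (k : ℕ) - 1) (H μ) ∈ domSpan μ.transpose
  normalized : ∀ μ, ev1 (H μ) = 1

/-- The diagonal operator on `Λ` acting on the Macdonald basis with eigenvalues `ev`. -/
def diag (B : MacdonaldBasis) (ev : YoungDiagram → K) (F : Λ) : Λ :=
  (B.H.repr F).sum fun μ c => (ev μ * c) • B.H μ

/-- The Delta eigenoperator `Δ_f : H̃_μ ↦ f[B_μ] H̃_μ`. -/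
def Delta (B : MacdonaldBasis) (f : Λ) : Λ → Λ :=
  diag B fun μ => MvPolynomial.aeval (Bexp μ) f

/-- `∇ : H̃_μ ↦ (-1)^{|μ|} q^{n(μ')} t^{n(μ)} H̃_μ`. -/
def nabla (B : MacdonaldBasis) : Λ → Λ :=
  diag B fun μ => (-1) ^ μ.card * q ^ nstat' μ * t ^ nstat μ

/-- The inverse of `∇`. -/
def nablaInv (B : MacdonaldBasis) : Λ → Λ :=
  diag B fun μ => ((-1) ^ μ.card * q ^ nstat' μ * t ^ nstat μ)⁻¹

/-- `Π_μ = ∏_{(i,j) ∈ μ/(1)} (1 - q^i t^j)` (product over all cells but the corner). -/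
def PiEv (μ : YoungDiagram) : K :=
  ∏ c ∈ μ.cells.erase (0, 0), (1 - q ^ c.2 * t ^ c.1)

/-- The operator `Π : H̃_μ ↦ Π_μ H̃_μ`. -/
def PiOp (B : MacdonaldBasis) : Λ → Λ := diag B PiEv

/-- The inverse of `Π`. -/
def PiInv (B : MacdonaldBasis) : Λ → Λ := diag B fun μ => (PiEv μ)⁻¹

/-- The Theta operator `Θ_k = Π ∘ (multiplication by e_k[X/M]) ∘ Π⁻¹`. -/
def Theta (B : MacdonaldBasis) (k : ℕ) (F : Λ) : Λ :=
  PiOp B (star (e k) * PiInv B F)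

/-- `Δ_v = ∑_{n ≥ 0} (-v)^n Δ_{e_n}`, the diagonal operator with eigenvalues
`∏_{(i,j) ∈ μ} (1 - v q^i t^j)`. -/
def DeltaV (B : MacdonaldBasis) (v : K) : Λ → Λ :=
  diag B fun μ => ∏ c ∈ μ.cells, (1 - v * q ^ c.2 * t ^ c.1)

/-- The inverse of `Δ_v`. -/
def DeltaVInv (B : MacdonaldBasis) (v : K) : Λ → Λ :=
  diag B fun μ => (∏ c ∈ μ.cells, (1 - v * q ^ c.2 * t ^ c.1))⁻¹

/-- `v ∈ ℚ(q,t)` is a monomial `q^a t^b`. -/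
def IsMonomial (v : K) : Prop := ∃ a b : ℤ, v = q ^ a * t ^ b

/-- `∏_{(i,j) ∈ μ} (1 - q^i t^j u)` as a polynomial in `u`. -/
def cellPoly (μ : YoungDiagram) : Polynomial K :=
  ∏ c ∈ μ.cells, (1 - Polynomial.C (q ^ c.2 * t ^ c.1) * Polynomial.X)

/-!
Write `E[Y] = exp (∑ p_k[Y] z^k / k)`. Since `T_{M/u}` is a ring map and `p_k` is additive,
`T_{M/u} E[zX/M] = E[zX/M + z/u]`, so `E[-zX/M] · T_{M/u} E[zX/M] = E[z/u] = ∑ z^k u^{-k}`, and the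
operator identity follows by multiplying with `T_{M/u} F · E[-uX]`; its coefficient of `z^k u^r`
is the second identity. The exponential is handled through its logarithmic derivative:
`exp (∑ c_k z^k / k)` is the unique series `G` with `G(0) = 1` and `G' = (∑ c_{k+1} z^k) G`, which
gives `E[A + B] = E[A] E[B]` and `E[zw] = ∑ (zw)^n` over any field of characteristic zero.
-/

section ExpCoeff

open PowerSeries

variable (𝕜 : Type*) {R S : Type*} [Field 𝕜] [CommRing R] [Algebra 𝕜 R] [CommRing S]
  [Algebra 𝕜 S]

/-- `genF` over an arbitrary commutative `𝕜`-algebra. -/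
def expCoeff (c : ℕ+ → R) : ℕ → R
  | 0 => 1
  | n + 1 => ((n : 𝕜) + 1)⁻¹ •
      ∑ k ∈ Finset.range (n + 1), c ⟨k + 1, k.succ_pos⟩ * expCoeff c (n - k)
  decreasing_by omega

/-- `∑ c_{k+1} z^k`, the derivative of `∑ c_k z^k / k`. -/
def logDerivSeries (c : ℕ+ → R) : PowerSeries R :=
  mk fun k => c ⟨k + 1, k.succ_pos⟩

variable {𝕜}

theorem map_expCoeff (φ : R →ₐ[𝕜] S) (c : ℕ+ → R) :
    ∀ n, φ (expCoeff 𝕜 c n) = expCoeff 𝕜 (fun k => φ (c k)) n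
  | 0 => by rw [expCoeff, expCoeff, map_one]
  | n + 1 => by
    rw [expCoeff, expCoeff, map_smul, map_sum]
    congr! 2 with k
    rw [map_mul, map_expCoeff φ c (n - k)]
  decreasing_by omega

variable [CharZero 𝕜]

theorem derivative_mk_expCoeff (c : ℕ+ → R) :
    derivative R (mk (expCoeff 𝕜 c)) = logDerivSeries c * mk (expCoeff 𝕜 c) := by
  ext n
  rw [coeff_derivative, coeff_mul,
    Finset.Nat.sum_antidiagonal_eq_sum_range_succ
      (fun i j => coeff i (logDerivSeries c) * coeff j _),
    coeff_mk, ← Nat.cast_succ, mul_comm, ← nsmul_eq_mul, ← Nat.cast_smul_eq_nsmul 𝕜, expCoeff,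
    Nat.cast_succ, smul_inv_smul₀ (Nat.cast_add_one_ne_zero n)]
  simp only [logDerivSeries, coeff_mk]

theorem mk_expCoeff_eq_of_derivative {c : ℕ+ → R} {G : PowerSeries R}
    (h0 : constantCoeff G = 1) (hG : derivative R G = logDerivSeries c * G) :
    mk (expCoeff 𝕜 c) = G := by
  ext n
  induction n using Nat.strong_induction_on with
  | _ n ih =>
    cases n with
    | zero => rw [coeff_mk, expCoeff, ← h0, coeff_zero_eq_constantCoeff_apply]
    | succ n =>
      have hcoeff := congrArg (coeff n) hG
      rw [coeff_derivative, coeff_mul,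
        Finset.Nat.sum_antidiagonal_eq_sum_range_succ
          (fun i j => coeff i (logDerivSeries c) * coeff j G)] at hcoeff
      have hsum : ∑ k ∈ Finset.range (n + 1), c ⟨k + 1, k.succ_pos⟩ * expCoeff 𝕜 c (n - k)
          = ((n : 𝕜) + 1) • coeff (n + 1) G := by
        rw [Algebra.smul_def, map_add, map_natCast, map_one, mul_comm, hcoeff]
        refine Finset.sum_congr rfl fun k _ => ?_
        rw [← ih (n - k) (by omega), coeff_mk, logDerivSeries, coeff_mk]
      rw [coeff_mk, expCoeff, hsum, inv_smul_smul₀ (Nat.cast_add_one_ne_zero n)]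

theorem mk_expCoeff_add (a b : ℕ+ → R) :
    mk (expCoeff 𝕜 (a + b)) = mk (expCoeff 𝕜 a) * mk (expCoeff 𝕜 b) := by
  refine mk_expCoeff_eq_of_derivative ?_ ?_
  · simp only [map_mul, ← coeff_zero_eq_constantCoeff_apply, coeff_mk, expCoeff, mul_one]
  · have hlog : logDerivSeries (a + b) = logDerivSeries a + logDerivSeries b := by
      ext n
      simp only [logDerivSeries, coeff_mk, map_add]
      rfl
    rw [Derivation.leibniz, derivative_mk_expCoeff, derivative_mk_expCoeff, hlog, smul_eq_mul,
      smul_eq_mul]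
    ring

theorem mk_expCoeff_pow (w : R) :
    mk (expCoeff 𝕜 fun k => w ^ (k : ℕ)) = mk (w ^ ·) := by
  refine mk_expCoeff_eq_of_derivative ?_ ?_
  · rw [← coeff_zero_eq_constantCoeff_apply, coeff_mk, pow_zero]
  · ext n
    have hterm : ∀ ij ∈ Finset.HasAntidiagonal.antidiagonal n,
        coeff ij.1 (logDerivSeries fun k : ℕ+ => w ^ (k : ℕ)) * coeff ij.2 (mk (w ^ ·))
          = w ^ (n + 1) := by
      rintro ⟨i, j⟩ hij
      rw [Finset.HasAntidiagonal.mem_antidiagonal] at hij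
      simp only [logDerivSeries, coeff_mk, PNat.mk_coe, ← pow_add]
      congr 1
      omega
    rw [coeff_derivative, coeff_mul, Finset.sum_congr rfl hterm, Finset.sum_const,
      Finset.Nat.card_antidiagonal, coeff_mk, nsmul_eq_mul, mul_comm, Nat.cast_succ]

end ExpCoeff

theorem single_neg_one_pow {R : Type*} [Semiring R] (n : ℕ) :
    (HahnSeries.single (-1 : ℤ) (1 : R)) ^ n = HahnSeries.single (-(n : ℤ)) 1 := by
  rw [HahnSeries.single_pow, one_pow, nsmul_eq_mul, mul_neg_one]

theorem coeff_mk_mul_mk_hahnCoeff {R : Type*} [Semiring R] (a : ℕ → R)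
    (G : PowerSeries (LaurentSeries R)) (k : ℕ) (r : ℤ) :
    PowerSeries.coeff k (PowerSeries.mk a * PowerSeries.mk fun n => (PowerSeries.coeff n G).coeff r)
      = (PowerSeries.coeff k (PowerSeries.mk (fun n => HahnSeries.C (a n)) * G)).coeff r := by
  simp only [PowerSeries.coeff_mul, HahnSeries.coeff_sum, PowerSeries.coeff_mk,
    HahnSeries.C_mul_eq_smul, HahnSeries.coeff_smul, smul_eq_mul]

theorem one_sub_algebraMap_X_pow_ne_zero {σ R : Type*} [CommRing R] [Nontrivial R] (i : σ)
    {k : ℕ} (hk : k ≠ 0) :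
    1 - algebraMap (MvPolynomial σ R) (FractionRing (MvPolynomial σ R)) (MvPolynomial.X i) ^ k
      ≠ 0 := by
  rw [sub_ne_zero, ← map_pow, ← map_one (algebraMap (MvPolynomial σ R) _), Ne,
    (IsFractionRing.injective (MvPolynomial σ R) (FractionRing (MvPolynomial σ R))).eq_iff]
  intro h
  simpa [hk] using congrArg (MvPolynomial.eval 0) h

theorem Mk_ne_zero (k : ℕ+) : Mk k ≠ 0 :=
  mul_ne_zero (one_sub_algebraMap_X_pow_ne_zero 0 k.ne_zero)
    (one_sub_algebraMap_X_pow_ne_zero 1 k.ne_zero)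

theorem genF_eq_expCoeff (c : ℕ+ → Λ) : ∀ n, genF c n = expCoeff K c n
  | 0 => by rw [genF, expCoeff]
  | n + 1 => by
    rw [genF, expCoeff]
    congr! 2 with k
    rw [genF_eq_expCoeff c (n - k)]
  decreasing_by omega

theorem map_Eser {S : Type*} [CommRing S] [Algebra K S] (φ : Λ →ₐ[K] S) (ζ : ℕ+ → K)
    (n : ℕ) :
    φ (Eser ζ n) = expCoeff K (fun k => φ (MvPolynomial.C (ζ k) * p k)) n := by
  rw [Eser, genF_eq_expCoeff, map_expCoeff]

theorem algebraMap_laurentSeries (a : K) :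
    algebraMap K (LaurentSeries Λ) a = HahnSeries.C (MvPolynomial.C a) := by
  rw [HahnSeries.algebraMap_apply', PowerSeries.algebraMap_apply, HahnSeries.ofPowerSeries_C]
  rfl

/-- `HahnSeries.C` as a `K`-algebra map. Instance search does not provide it, because the
`K`-algebra structure on `LaurentSeries Λ` that `TMz` uses goes through `PowerSeries Λ`. -/
def laurentC : Λ →ₐ[K] LaurentSeries Λ where
  toRingHom := HahnSeries.C
  commutes' a := (algebraMap_laurentSeries a).symm

theorem laurentC_apply (x : Λ) : laurentC x = HahnSeries.C x := rfl

theorem TMz_C (a : K) : TMz (MvPolynomial.C a) = HahnSeries.C (MvPolynomial.C a) :=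
  (TMz.commutes a).trans (algebraMap_laurentSeries a)

theorem TMz_p (k : ℕ+) :
    TMz (p k) = HahnSeries.C (p k) +
      HahnSeries.C (MvPolynomial.C (Mk k)) * HahnSeries.single (-(k : ℤ)) (1 : Λ) := by
  rw [HahnSeries.C_mul_eq_smul, MvPolynomial.C_eq_smul_one, smul_assoc, one_smul, TMz, p,
    MvPolynomial.aeval_X]
  rfl

theorem mk_C_Eser_neg_invM_mul_mk_TMz_Eser_invM :
    (PowerSeries.mk fun n => (HahnSeries.C (Eser (fun j => -invM j) n) : LaurentSeries Λ))
      * PowerSeries.mk (fun n => TMz (Eser invM n))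
    = PowerSeries.mk fun n => HahnSeries.single (-(n : ℤ)) (1 : Λ) := by
  -- `p_k[-X/M] + p_k[(X + M/u)/M] = u^{-k}`
  have hpowerSum : (fun k => HahnSeries.C (MvPolynomial.C (-invM k) * p k)) +
      (fun k => TMz (MvPolynomial.C (invM k) * p k)) =
      fun k : ℕ+ => HahnSeries.single (-1 : ℤ) (1 : Λ) ^ (k : ℕ) := by
    funext k
    have hunit : (HahnSeries.C (MvPolynomial.C (invM k)) : LaurentSeries Λ) *
        HahnSeries.C (MvPolynomial.C (Mk k)) = 1 := by
      rw [← map_mul, ← map_mul, invM, inv_mul_cancel₀ (Mk_ne_zero k), map_one, map_one]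
    rw [Pi.add_apply, map_mul, map_mul, TMz_C, TMz_p, map_neg, map_neg, mul_add, ← mul_assoc,
      hunit, one_mul, single_neg_one_pow]
    ring
  have hC : (fun n => (HahnSeries.C (Eser (fun j => -invM j) n) : LaurentSeries Λ)) =
      fun n => laurentC (Eser (fun j => -invM j) n) := rfl
  rw [hC]
  simp only [map_Eser (S := LaurentSeries Λ), laurentC_apply, ← single_neg_one_pow]
  rw [← mk_expCoeff_add, hpowerSum, mk_expCoeff_pow]

theorem mk_C_Eser_neg_invM_mul_mk_TMz_Eser_invM_mul (F : Λ) :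
    (PowerSeries.mk fun n => (HahnSeries.C (Eser (fun j => -invM j) n) : LaurentSeries Λ))
      * (PowerSeries.mk fun n => TMz (Eser invM n * F) * EnegL)
    = (PowerSeries.mk fun n => (HahnSeries.single (-(n : ℤ)) (1 : Λ) : LaurentSeries Λ))
      * PowerSeries.C (TMz F * EnegL) := by
  have hfactor : (PowerSeries.mk fun n => TMz (Eser invM n * F) * EnegL) =
      PowerSeries.mk (fun n => TMz (Eser invM n)) * PowerSeries.C (TMz F * EnegL) := by
    ext n
    rw [PowerSeries.coeff_mul_C, PowerSeries.coeff_mk, PowerSeries.coeff_mk, map_mul, mul_assoc]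
  rw [hfactor, ← mul_assoc, mk_C_Eser_neg_invM_mul_mk_TMz_Eser_invM]

theorem coeff_mk_Eser_neg_invM_mul_mk_D (k : ℕ) (r : ℤ) (F : Λ) :
    PowerSeries.coeff k ((PowerSeries.mk fun n => Eser (fun j => -invM j) n)
        * PowerSeries.mk fun n => D r (Eser invM n * F)) = D ((k : ℤ) + r) F := by
  have hshift := HahnSeries.coeff_single_mul_add (r := (1 : Λ)) (x := TMz F * EnegL)
    (a := (k : ℤ) + r) (b := -(k : ℤ))
  rw [add_neg_cancel_comm, one_mul] at hshift
  calc _ = (PowerSeries.coeff k ((PowerSeries.mk fun n =>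
          (HahnSeries.C (Eser (fun j => -invM j) n) : LaurentSeries Λ))
            * (PowerSeries.mk fun n => TMz (Eser invM n * F) * EnegL))).coeff r := by
        rw [← coeff_mk_mul_mk_hahnCoeff]
        simp only [D, PowerSeries.coeff_mk]
    _ = D ((k : ℤ) + r) F := by
        rw [mk_C_Eser_neg_invM_mul_mk_TMz_Eser_invM_mul, PowerSeries.coeff_mul_C,
          PowerSeries.coeff_mk, hshift, D]

/-- `P_{-z/M} ∘ P_{-u} ∘ T_{M/u} ∘ P_{z/M} = (1/(1-z/u)) · P_{-u} ∘ T_{M/u}`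
(z-power series with coefficients Laurent series in `u`; `1/(1-z/u) = ∑ z^k u^{-k}`),
and consequently `P_{-z/M} D_r P_{z/M} |_{z^k} = D_{k+r}` for all `k ≥ 0`. -/
theorem P_PT_P_eq_geom :
    (∀ F : Λ,
        (PowerSeries.mk fun n =>
            (HahnSeries.C (Eser (fun j => -invM j) n) : LaurentSeries Λ))
          * (PowerSeries.mk fun n => TMz (Eser invM n * F) * EnegL)
        = (PowerSeries.mk fun k =>
            (HahnSeries.single (-(k : ℤ)) (1 : Λ) : LaurentSeries Λ))
            * PowerSeries.C (TMz F * EnegL))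
    ∧ (∀ (k : ℕ) (r : ℤ) (F : Λ),
        (PowerSeries.coeff k)
            ((PowerSeries.mk fun n => Eser (fun j => -invM j) n)
              * PowerSeries.mk fun n => D r (Eser invM n * F))
          = D ((k : ℤ) + r) F) :=
  ⟨mk_C_Eser_neg_invM_mul_mk_TMz_Eser_invM_mul, coeff_mk_Eser_neg_invM_mul_mk_D⟩

end ThetaOperators
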